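/- Let 1 < p < q and suppose u₁ ∈ W^{1,p}₀(Ω) satisfies ‖u₁‖_p = 1 and ‖∇u₁‖_p^p = λ₁ (first eigenfunction normalization), with u₁ also lying in L^q_μ with ‖∇u₁‖_{q,μ}^q = K < ∞. If f satisfies F(x,s) ≤ (ε/p)|s|^p for |s| ≤ δ and 0 ≤ t·u₁(x) ≤ δ on Ω, then φ₊(t·u₁) ≤ t^p(λ₁ − λ + ε)/p + (t^q/q)·K, where φ₊(u) = ∫_Ω [ (1/p)|∇u|^p + (μ(x)/q)|∇u|^q ] dx − ∫_Ω H₊(x,u) dx and H₊(x,s) = λ s^p/p − F(x,s) for 0 ≤ s ≤ ū with δ < ū. -/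

import Mathlib

open MeasureTheory

set_option autoImplicit false

/-!
Both energies are positively homogeneous along the ray `t ↦ t • u₁`: the gradient terms scale
by `t^p` and `t^q`, giving `t^p λ₁ / p + t^q K / q`, and `∫ λ (t u₁)^p / p = t^p λ / p` by the
normalization `‖u₁‖_p = 1`. Since `0 ≤ t u₁ ≤ δ`, the growth bound on `F` near zero gives
`∫ F(x, t u₁) ≤ (ε / p) t^p`, and the estimate follows.
-/

lemma norm_smul_rpow_of_nonneg {E : Type*} [NormedAddCommGroup E] [NormedSpace ℝ E]
    {t : ℝ} (ht : 0 ≤ t) (v : E) (p : ℝ) : ‖t • v‖ ^ p = t ^ p * ‖v‖ ^ p := by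
  rw [norm_smul, Real.norm_of_nonneg ht, Real.mul_rpow ht (norm_nonneg v)]

section

variable {Ω : Type*} [MeasurableSpace Ω] {ν : Measure Ω}

lemma integral_energy_smul {E : Type*} [NormedAddCommGroup E] [NormedSpace ℝ E]
    {p q t : ℝ} (ht : 0 ≤ t) (μ : Ω → ℝ) {g : Ω → E}
    (hg : Integrable (fun x => ‖g x‖ ^ p) ν) (hμg : Integrable (fun x => μ x * ‖g x‖ ^ q) ν) :
    ∫ x, (1 / p * ‖t • g x‖ ^ p + μ x / q * ‖t • g x‖ ^ q) ∂ν =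
      t ^ p / p * ∫ x, ‖g x‖ ^ p ∂ν + t ^ q / q * ∫ x, μ x * ‖g x‖ ^ q ∂ν := by
  have hpointwise : ∀ x, 1 / p * ‖t • g x‖ ^ p + μ x / q * ‖t • g x‖ ^ q =
      t ^ p / p * ‖g x‖ ^ p + t ^ q / q * (μ x * ‖g x‖ ^ q) := fun x => by
    rw [norm_smul_rpow_of_nonneg ht, norm_smul_rpow_of_nonneg ht]
    ring
  simp_rw [hpointwise]
  rw [integral_add (hg.const_mul _) (hμg.const_mul _), integral_const_mul, integral_const_mul]

lemma integral_rpow_smul_sub {p t lam : ℝ} (ht : 0 ≤ t) {u : Ω → ℝ} (hu : ∀ᵐ x ∂ν, 0 ≤ u x)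
    (F : Ω → ℝ → ℝ) (hup : Integrable (fun x => |u x| ^ p) ν)
    (hF : Integrable (fun x => F x (t * u x)) ν) :
    ∫ x, (lam * (t * u x) ^ p / p - F x (t * u x)) ∂ν =
      lam * t ^ p / p * ∫ x, |u x| ^ p ∂ν - ∫ x, F x (t * u x) ∂ν := by
  have hpointwise : ∀ᵐ x ∂ν, lam * (t * u x) ^ p / p - F x (t * u x) =
      lam * t ^ p / p * |u x| ^ p - F x (t * u x) := by
    filter_upwards [hu] with x hx
    rw [Real.mul_rpow ht hx, abs_of_nonneg hx]
    ring
  rw [integral_congr_ae hpointwise, integral_sub (hup.const_mul _) hF, integral_const_mul]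

lemma integral_le_of_rpow_bound_near_zero {p t c δ : ℝ} (ht : 0 ≤ t) {u : Ω → ℝ}
    (hu : ∀ᵐ x ∂ν, 0 ≤ u x) (hsmall : ∀ᵐ x ∂ν, t * u x ≤ δ) {F : Ω → ℝ → ℝ}
    (hFδ : ∀ᵐ x ∂ν, ∀ s : ℝ, |s| ≤ δ → F x s ≤ c * |s| ^ p)
    (hup : Integrable (fun x => |u x| ^ p) ν) (hF : Integrable (fun x => F x (t * u x)) ν) :
    ∫ x, F x (t * u x) ∂ν ≤ c * t ^ p * ∫ x, |u x| ^ p ∂ν := by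
  rw [← integral_const_mul]
  refine integral_mono_ae hF (hup.const_mul _) ?_
  filter_upwards [hFδ, hsmall, hu] with x hFx hsx hx
  have habs : |t * u x| = t * u x := abs_of_nonneg (mul_nonneg ht hx)
  calc F x (t * u x) ≤ c * |t * u x| ^ p := hFx _ (habs.symm ▸ hsx)
    _ = c * t ^ p * |u x| ^ p := by
      rw [habs, Real.mul_rpow ht hx, abs_of_nonneg hx, mul_assoc]

end

theorem stmt17_general {Ω : Type*} [MeasurableSpace Ω] (ν : Measure Ω) {N : ℕ}
    (p q lam lam1 K eps delta t : ℝ)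
    (ht : 0 < t)
    (μ : Ω → ℝ)
    (u₁ : Ω → ℝ) (g₁ : Ω → EuclideanSpace ℝ (Fin N))
    (hu₁pos : ∀ᵐ x ∂ν, 0 ≤ u₁ x)
    (hnorm : ∫ x, |u₁ x| ^ p ∂ν = 1)
    (heig : ∫ x, ‖g₁ x‖ ^ p ∂ν = lam1)
    (hK : ∫ x, μ x * ‖g₁ x‖ ^ q ∂ν = K)
    (F : Ω → ℝ → ℝ)
    (hFsmall : ∀ᵐ x ∂ν, ∀ s : ℝ, |s| ≤ delta → F x s ≤ eps / p * |s| ^ p)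
    (hsmall : ∀ᵐ x ∂ν, t * u₁ x ≤ delta)
    (hint1 : Integrable (fun x => ‖g₁ x‖ ^ p) ν)
    (hint2 : Integrable (fun x => μ x * ‖g₁ x‖ ^ q) ν)
    (hint3 : Integrable (fun x => |u₁ x| ^ p) ν)
    (hint4 : Integrable (fun x => F x (t * u₁ x)) ν) :
    (∫ x, (1 / p * ‖t • g₁ x‖ ^ p + μ x / q * ‖t • g₁ x‖ ^ q) ∂ν) -
      (∫ x, (lam * (t * u₁ x) ^ p / p - F x (t * u₁ x)) ∂ν) ≤
    t ^ p * ((lam1 - lam + eps) / p) + t ^ q / q * K := by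
  have hFbound := integral_le_of_rpow_bound_near_zero ht.le hu₁pos hsmall hFsmall hint3 hint4
  rw [integral_energy_smul ht.le μ hint1 hint2, integral_rpow_smul_sub ht.le hu₁pos F hint3 hint4,
    heig, hK]
  rw [hnorm] at hFbound ⊢
  have hsplit : t ^ p * ((lam1 - lam + eps) / p) =
      t ^ p / p * lam1 - lam * t ^ p / p + eps / p * t ^ p := by ring
  linarith

/-- The key energy estimate (6): if `u₁` is the normalized first eigenfunction
(`‖u₁‖_p = 1`, `‖∇u₁‖_p^p = λ₁`, `‖∇u₁‖_{q,μ}^q = K`), `F(x,s) ≤ (ε/p)|s|^p` for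
`|s| ≤ δ` and `0 ≤ t u₁ ≤ δ < ū` a.e., then
`φ₊(t u₁) ≤ t^p (λ₁ − λ + ε)/p + (t^q/q) K`, where
`φ₊(u) = ∫ (1/p)|∇u|^p + (μ/q)|∇u|^q dx − ∫ H₊(x,u) dx` and
`H₊(x,s) = λ s^p/p − F(x,s)` for `0 ≤ s ≤ ū`. -/
theorem stmt17 {Ω : Type*} [MeasurableSpace Ω] (ν : Measure Ω) {N : ℕ}
    (p q lam lam1 K eps delta ubar t : ℝ)
    (hp : 1 < p) (hpq : p < q) (hlam : 0 < lam)
    (heps : 0 < eps) (hdelta : 0 < delta) (hdu : delta < ubar) (ht : 0 < t)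
    (μ : Ω → ℝ) (hμ : ∀ x, 0 ≤ μ x)
    (u₁ : Ω → ℝ) (g₁ : Ω → EuclideanSpace ℝ (Fin N))
    (hu₁pos : ∀ᵐ x ∂ν, 0 ≤ u₁ x)
    (hnorm : ∫ x, |u₁ x| ^ p ∂ν = 1)
    (heig : ∫ x, ‖g₁ x‖ ^ p ∂ν = lam1)
    (hK : ∫ x, μ x * ‖g₁ x‖ ^ q ∂ν = K)
    (F : Ω → ℝ → ℝ)
    (hFsmall : ∀ᵐ x ∂ν, ∀ s : ℝ, |s| ≤ delta → F x s ≤ eps / p * |s| ^ p)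
    (hsmall : ∀ᵐ x ∂ν, t * u₁ x ≤ delta)
    (hint1 : Integrable (fun x => ‖g₁ x‖ ^ p) ν)
    (hint2 : Integrable (fun x => μ x * ‖g₁ x‖ ^ q) ν)
    (hint3 : Integrable (fun x => |u₁ x| ^ p) ν)
    (hint4 : Integrable (fun x => F x (t * u₁ x)) ν) :
    (∫ x, (1 / p * ‖t • g₁ x‖ ^ p + μ x / q * ‖t • g₁ x‖ ^ q) ∂ν) -
      (∫ x, (lam * (t * u₁ x) ^ p / p - F x (t * u₁ x)) ∂ν) ≤
    t ^ p * ((lam1 - lam + eps) / p) + t ^ q / q * K :=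
  stmt17_general ν p q lam lam1 K eps delta t ht μ u₁ g₁ hu₁pos hnorm heig hK F hFsmall hsmall hint1
    hint2 hint3 hint4
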